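/- With the same notation, for real variables x_1,...,x_d: 3 Σ_{j=1}^d Σ_{i≠j} Σ_{k≠i,j} (x_j² + (x_j/2)(x_i + x_k)) Y(i,j,k) + (1/3) Σ_{j=1}^d Σ_{i≠j} α_T(i,j) x_j (x_j + x_i/2)(q_i + 3 q_j) + (4/9) Σ_{j=1}^d q_j x_j² = 0. -/

import Mathlib

open Finset

/-- A tableau `T` has content `ς = (s 1, …, s d)`. -/
def hasContent {μ : YoungDiagram} (T : SemistandardYoungTableau μ) (d : ℕ) (s : ℕ → ℕ) : Prop :=
  ∀ k : ℕ, (μ.cells.filter fun c => T c.1 c.2 = k).card =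
    if k ∈ Finset.Icc 1 d then s k else 0

/-- `psi m T i j` is the number of columns of the 3-column tableau `T` (with `m` rows)
containing both entries `i` and `j`, with `psi m T i i = 0`. -/
def psi (m : ℕ) {μ : YoungDiagram} (T : SemistandardYoungTableau μ) (i j : ℕ) : ℕ :=
  if i = j then 0 else
    ((Finset.range 3).filter (fun c =>
      (∃ r ∈ Finset.range m, T r c = i) ∧ (∃ r ∈ Finset.range m, T r c = j))).card

/-- `α_T(i,j) = ψ_{T^t}(i,j) - s i * s j / 3`, where the column-strict tableau `T` here plays
the role of the conjugate `T^t` of the row-strict tableau of the paper. -/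
noncomputable def alphaT (m : ℕ) {μ : YoungDiagram} (T : SemistandardYoungTableau μ)
    (s : ℕ → ℕ) (i j : ℕ) : ℝ :=
  (psi m T i j : ℝ) - (s i : ℝ) * (s j : ℝ) / 3

/-- `q i = (-1)^(s i + 1)`. -/
noncomputable def qs (s : ℕ → ℕ) (i : ℕ) : ℝ := (-1 : ℝ) ^ (s i + 1)

/-- `Y(i,j,k) = (q_j/3)(α_T(i,j) α_T(j,k) − α_T(i,k)/3)`. -/
noncomputable def Yfun (m : ℕ) {μ : YoungDiagram} (T : SemistandardYoungTableau μ)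
    (s : ℕ → ℕ) (i j k : ℕ) : ℝ :=
  (qs s j / 3) * (alphaT m T s i j * alphaT m T s j k - alphaT m T s i k / 3)

section Aux

variable {m d : ℕ} {s : ℕ → ℕ} {μ : YoungDiagram} {T : SemistandardYoungTableau μ}

lemma aux_mem_mu (hrect : μ.cells = Finset.range m ×ˢ Finset.range 3)
    {r c : ℕ} (hr : r < m) (hc : c < 3) : (r, c) ∈ μ := by
  rw [← μ.mem_cells, hrect, Finset.mem_product]
  exact ⟨Finset.mem_range.2 hr, Finset.mem_range.2 hc⟩

lemma aux_col_inj (hrect : μ.cells = Finset.range m ×ˢ Finset.range 3)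
    {r1 r2 c : ℕ} (h1 : r1 < m) (h2 : r2 < m) (hc : c < 3)
    (he : T r1 c = T r2 c) : r1 = r2 := by
  rcases lt_trichotomy r1 r2 with h | h | h
  · exact absurd he (ne_of_lt (T.col_strict h (aux_mem_mu hrect h2 hc)))
  · exact h
  · exact absurd he.symm (ne_of_lt (T.col_strict h (aux_mem_mu hrect h1 hc)))

lemma aux_fiber_card (hrect : μ.cells = Finset.range m ×ˢ Finset.range 3)
    {c : ℕ} (hc : c < 3) (i : ℕ) :
    ((Finset.range m).filter (fun r => T r c = i)).card
      = if (∃ r ∈ Finset.range m, T r c = i) then 1 else 0 := by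
  by_cases h : ∃ r ∈ Finset.range m, T r c = i
  · rw [if_pos h]
    obtain ⟨r0, hr0, he0⟩ := h
    rw [Finset.card_eq_one]
    refine ⟨r0, ?_⟩
    ext r
    simp only [Finset.mem_filter, Finset.mem_singleton, Finset.mem_range] at *
    constructor
    · rintro ⟨hr, he⟩
      exact aux_col_inj hrect hr hr0 hc (he.trans he0.symm)
    · rintro rfl; exact ⟨hr0, he0⟩
  · rw [if_neg h, Finset.card_eq_zero, Finset.filter_eq_empty_iff]
    intro r hr he
    exact h ⟨r, hr, he⟩

lemma aux_count_cols (hrect : μ.cells = Finset.range m ×ˢ Finset.range 3)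
    (hT : hasContent T d s) (i : ℕ) :
    ((Finset.range 3).filter (fun c => ∃ r ∈ Finset.range m, T r c = i)).card
      = if i ∈ Finset.Icc 1 d then s i else 0 := by
  rw [← hT i, hrect]
  rw [Finset.card_filter, Finset.card_filter, Finset.sum_product]
  rw [Finset.sum_comm]
  refine Finset.sum_congr rfl fun c hc => ?_
  have hc3 : c < 3 := Finset.mem_range.1 hc
  rw [← Finset.card_filter, aux_fiber_card hrect hc3 i]

lemma aux_val_mem (hrect : μ.cells = Finset.range m ×ˢ Finset.range 3)
    (hT : hasContent T d s) {r c : ℕ} (hr : r < m) (hc : c < 3) :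
    T r c ∈ Finset.Icc 1 d := by
  by_contra h
  have h0 := hT (T r c)
  rw [if_neg h] at h0
  have hmem : (r, c) ∈ μ.cells.filter fun p => T p.1 p.2 = T r c := by
    refine Finset.mem_filter.2 ⟨?_, rfl⟩
    rw [hrect, Finset.mem_product]
    exact ⟨Finset.mem_range.2 hr, Finset.mem_range.2 hc⟩
  exact Finset.card_ne_zero_of_mem hmem h0

lemma aux_col_card (hrect : μ.cells = Finset.range m ×ˢ Finset.range 3)
    (hT : hasContent T d s) {c : ℕ} (hc : c < 3) :
    ((Finset.Icc 1 d).filter (fun i => ∃ r ∈ Finset.range m, T r c = i)).card = m := by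
  have hset : ((Finset.Icc 1 d).filter (fun i => ∃ r ∈ Finset.range m, T r c = i))
      = (Finset.range m).image (fun r => T r c) := by
    ext i
    simp only [Finset.mem_filter, Finset.mem_image, Finset.mem_range]
    constructor
    · rintro ⟨_, r, hr, he⟩
      exact ⟨r, hr, he⟩
    · rintro ⟨r, hr, he⟩
      exact ⟨he ▸ aux_val_mem hrect hT hr hc, r, hr, he⟩
  rw [hset, Finset.card_image_of_injOn, Finset.card_range]
  intro r1 h1 r2 h2 he
  exact aux_col_inj hrect (Finset.mem_range.1 h1) (Finset.mem_range.1 h2) hc he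

lemma psi_symm (m : ℕ) (T : SemistandardYoungTableau μ) (i j : ℕ) :
    psi m T i j = psi m T j i := by
  unfold psi
  by_cases h : i = j
  · rw [if_pos h, if_pos h.symm]
  · rw [if_neg h, if_neg (Ne.symm h)]
    congr 1
    apply Finset.filter_congr
    intro c _
    simp [and_comm]

lemma alpha_symm (m : ℕ) (T : SemistandardYoungTableau μ) (s : ℕ → ℕ) (i j : ℕ) :
    alphaT m T s i j = alphaT m T s j i := by
  unfold alphaT
  rw [psi_symm]
  ring

lemma Y_symm (m : ℕ) (T : SemistandardYoungTableau μ) (s : ℕ → ℕ) (i j k : ℕ) :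
    Yfun m T s i j k = Yfun m T s k j i := by
  unfold Yfun
  rw [alpha_symm m T s i j, alpha_symm m T s j k, alpha_symm m T s i k]
  ring

/-- the quadratic relation -/
lemma aux_quad (hrect : μ.cells = Finset.range m ×ˢ Finset.range 3)
    (hT : hasContent T d s) (hs : ∀ i ∈ Finset.Icc 1 d, s i = 1 ∨ s i = 2)
    {i j : ℕ} (hi : i ∈ Finset.Icc 1 d) (hj : j ∈ Finset.Icc 1 d) (hij : i ≠ j) :
    3 * (alphaT m T s i j) ^ 2 - qs s i * qs s j * alphaT m T s i j - 2/3 = 0 := by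
  have hpsieq : psi m T i j
      = (((Finset.range 3).filter (fun c => ∃ r ∈ Finset.range m, T r c = i))
        ∩ ((Finset.range 3).filter (fun c => ∃ r ∈ Finset.range m, T r c = j))).card := by
    rw [psi, if_neg hij, ← Finset.filter_and]
  have hci := aux_count_cols hrect hT i
  have hcj := aux_count_cols hrect hT j
  rw [if_pos hi] at hci
  rw [if_pos hj] at hcj
  have h1 : psi m T i j ≤ s i := by
    rw [hpsieq, ← hci]
    exact Finset.card_le_card Finset.inter_subset_left
  have h2 : psi m T i j ≤ s j := by
    rw [hpsieq, ← hcj]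
    exact Finset.card_le_card Finset.inter_subset_right
  have h3 : s i + s j ≤ psi m T i j + 3 := by
    rw [hpsieq, ← hci, ← hcj, ← Finset.card_inter_add_card_union]
    have : (((Finset.range 3).filter (fun c => ∃ r ∈ Finset.range m, T r c = i))
        ∪ ((Finset.range 3).filter (fun c => ∃ r ∈ Finset.range m, T r c = j))).card
        ≤ 3 := by
      have := Finset.card_le_card (Finset.union_subset (Finset.filter_subset _ _)
        (Finset.filter_subset _ _) :
        ((Finset.range 3).filter (fun c => ∃ r ∈ Finset.range m, T r c = i))
        ∪ ((Finset.range 3).filter (fun c => ∃ r ∈ Finset.range m, T r c = j))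
          ⊆ Finset.range 3)
      simpa using this
    omega
  simp only [alphaT, qs]
  rcases hs i hi with h | h <;> rcases hs j hj with h' | h' <;>
    · simp only [h, h'] at h1 h2 h3 ⊢
      set n := psi m T i j with hn
      interval_cases n <;> norm_num <;> omega

end Aux

section Sums

variable {m d : ℕ} {s : ℕ → ℕ} {μ : YoungDiagram} {T : SemistandardYoungTableau μ}

lemma sum_filter_ne {A : Finset ℕ} {j : ℕ} (hj : j ∈ A) (f : ℕ → ℝ) :
    ∑ i ∈ A.filter (· ≠ j), f i = (∑ i ∈ A, f i) - f j := by
  rw [Finset.filter_ne', Finset.sum_erase_eq_sub hj]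

lemma sum_filter_ne2 {A : Finset ℕ} {i j : ℕ} (hi : i ∈ A) (hj : j ∈ A) (hij : i ≠ j)
    (f : ℕ → ℝ) :
    ∑ k ∈ A.filter (fun k => k ≠ i ∧ k ≠ j), f k = (∑ k ∈ A, f k) - f i - f j := by
  have hset : A.filter (fun k => k ≠ i ∧ k ≠ j) = (A.erase j).erase i := by
    ext k
    simp only [Finset.mem_filter, Finset.mem_erase]
    tauto
  rw [hset, Finset.sum_erase_eq_sub (Finset.mem_erase.2 ⟨hij, hi⟩),
    Finset.sum_erase_eq_sub hj]
  ring

lemma psi_self (m : ℕ) (T : SemistandardYoungTableau μ) (j : ℕ) : psi m T j j = 0 := by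
  rw [psi, if_pos rfl]

lemma aux_sum_alpha (hrect : μ.cells = Finset.range m ×ˢ Finset.range 3)
    (hT : hasContent T d s) (hsum : ∑ i ∈ Finset.Icc 1 d, s i = 3 * m)
    {j : ℕ} (hj : j ∈ Finset.Icc 1 d) :
    ∑ i ∈ Finset.Icc 1 d, alphaT m T s i j = -(s j : ℝ) := by
  have hpsig : ∀ i, i ≠ j → (psi m T i j : ℝ)
      = ∑ c ∈ Finset.range 3,
          if (∃ r ∈ Finset.range m, T r c = i) ∧ (∃ r ∈ Finset.range m, T r c = j)
          then (1:ℝ) else 0 := by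
    intro i hij
    rw [Finset.sum_boole, psi, if_neg hij]
  have hsj : (∑ c ∈ Finset.range 3,
      if (∃ r ∈ Finset.range m, T r c = j) then (1:ℝ) else 0) = (s j : ℝ) := by
    rw [Finset.sum_boole]
    have := aux_count_cols hrect hT j
    rw [if_pos hj] at this
    norm_cast
  have hgj : (∑ c ∈ Finset.range 3,
      if (∃ r ∈ Finset.range m, T r c = j) ∧ (∃ r ∈ Finset.range m, T r c = j)
      then (1:ℝ) else 0) = (s j : ℝ) := by
    rw [← hsj]
    apply Finset.sum_congr rfl
    intro c _
    simp [and_self]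
  have hsumg : ∑ i ∈ Finset.Icc 1 d, (∑ c ∈ Finset.range 3,
        if (∃ r ∈ Finset.range m, T r c = i) ∧ (∃ r ∈ Finset.range m, T r c = j)
        then (1:ℝ) else 0)
      = (m : ℝ) * (s j : ℝ) := by
    rw [Finset.sum_comm]
    have hcol : ∀ c ∈ Finset.range 3,
        (∑ i ∈ Finset.Icc 1 d,
          if (∃ r ∈ Finset.range m, T r c = i) ∧ (∃ r ∈ Finset.range m, T r c = j)
          then (1:ℝ) else 0)
        = if (∃ r ∈ Finset.range m, T r c = j) then (m : ℝ) else 0 := by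
      intro c hc
      by_cases hPj : ∃ r ∈ Finset.range m, T r c = j
      · rw [if_pos hPj]
        have heq : ∀ i ∈ Finset.Icc 1 d,
            (if (∃ r ∈ Finset.range m, T r c = i) ∧ (∃ r ∈ Finset.range m, T r c = j)
              then (1:ℝ) else 0)
            = if (∃ r ∈ Finset.range m, T r c = i) then (1:ℝ) else 0 := by
          intro i _
          exact if_congr (and_iff_left hPj) rfl rfl
        rw [Finset.sum_congr rfl heq, Finset.sum_boole]
        exact_mod_cast aux_col_card hrect hT (Finset.mem_range.1 hc)
      · rw [if_neg hPj]
        apply Finset.sum_eq_zero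
        intro i _
        rw [if_neg (fun h => hPj h.2)]
    rw [Finset.sum_congr rfl hcol]
    have : ∑ c ∈ Finset.range 3, (if (∃ r ∈ Finset.range m, T r c = j) then (m:ℝ) else 0)
        = (m : ℝ) * ∑ c ∈ Finset.range 3,
            (if (∃ r ∈ Finset.range m, T r c = j) then (1:ℝ) else 0) := by
      rw [Finset.mul_sum]
      apply Finset.sum_congr rfl
      intro c _
      split <;> ring
    rw [this, hsj]
  have hpsisum : ∑ i ∈ Finset.Icc 1 d, (psi m T i j : ℝ) = (m : ℝ) * s j - s j := by
    rw [← Finset.sum_erase_add _ _ hj, psi_self, Nat.cast_zero, add_zero]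
    have : ∑ i ∈ (Finset.Icc 1 d).erase j, (psi m T i j : ℝ)
        = ∑ i ∈ (Finset.Icc 1 d).erase j,
            (∑ c ∈ Finset.range 3,
              if (∃ r ∈ Finset.range m, T r c = i) ∧ (∃ r ∈ Finset.range m, T r c = j)
              then (1:ℝ) else 0) := by
      apply Finset.sum_congr rfl
      intro i hi
      exact hpsig i (Finset.ne_of_mem_erase hi)
    rw [this, Finset.sum_erase_eq_sub hj, hsumg, hgj]
  have hcast : (∑ i ∈ Finset.Icc 1 d, (s i : ℝ)) = 3 * (m : ℝ) := by
    rw [← Nat.cast_sum]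
    exact_mod_cast congrArg (Nat.cast : ℕ → ℝ) hsum
  unfold alphaT
  rw [Finset.sum_sub_distrib, hpsisum]
  have : ∑ i ∈ Finset.Icc 1 d, (s i : ℝ) * (s j : ℝ) / 3
      = (∑ i ∈ Finset.Icc 1 d, (s i : ℝ)) * (s j : ℝ) / 3 := by
    rw [← Finset.sum_div, ← Finset.sum_mul]
  rw [this, hcast]
  ring

lemma qs_one {i : ℕ} (h : s i = 1) : qs s i = 1 := by simp [qs, h]

lemma qs_two {i : ℕ} (h : s i = 2) : qs s i = -1 := by rw [qs, h]; norm_num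

lemma alpha_self (m : ℕ) (T : SemistandardYoungTableau μ) (s : ℕ → ℕ) (j : ℕ) :
    alphaT m T s j j = -((s j : ℝ) * (s j) / 3) := by
  unfold alphaT
  rw [psi_self]
  push_cast
  ring

/-- F2 : the deleted row sum -/
lemma aux_sum_alpha_ne (hrect : μ.cells = Finset.range m ×ˢ Finset.range 3)
    (hT : hasContent T d s) (hs : ∀ i ∈ Finset.Icc 1 d, s i = 1 ∨ s i = 2)
    (hsum : ∑ i ∈ Finset.Icc 1 d, s i = 3 * m)
    {j : ℕ} (hj : j ∈ Finset.Icc 1 d) :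
    ∑ i ∈ (Finset.Icc 1 d).filter (· ≠ j), alphaT m T s i j = -(2/3) := by
  rw [sum_filter_ne hj, aux_sum_alpha hrect hT hsum hj, alpha_self]
  rcases hs j hj with h | h <;> rw [h] <;> norm_num

/-- F3 : the collapsed inner Y-sum -/
lemma aux_sumY (hrect : μ.cells = Finset.range m ×ˢ Finset.range 3)
    (hT : hasContent T d s) (hs : ∀ i ∈ Finset.Icc 1 d, s i = 1 ∨ s i = 2)
    (hsum : ∑ i ∈ Finset.Icc 1 d, s i = 3 * m)
    {i j : ℕ} (hi : i ∈ Finset.Icc 1 d) (hj : j ∈ Finset.Icc 1 d) (hij : i ≠ j) :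
    ∑ k ∈ (Finset.Icc 1 d).filter (fun k => k ≠ i ∧ k ≠ j), Yfun m T s i j k
      = -(qs s i + qs s j) * alphaT m T s i j / 9 := by
  have hSA : ∑ k ∈ (Finset.Icc 1 d).filter (fun k => k ≠ i ∧ k ≠ j), alphaT m T s j k
      = -(s j : ℝ) - alphaT m T s i j + (s j : ℝ) * (s j) / 3 := by
    rw [sum_filter_ne2 hi hj hij (fun k => alphaT m T s j k)]
    have h0 : ∑ k ∈ Finset.Icc 1 d, alphaT m T s j k = -(s j : ℝ) := by
      rw [Finset.sum_congr rfl (fun k _ => alpha_symm m T s j k)]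
      exact aux_sum_alpha hrect hT hsum hj
    rw [h0, alpha_symm m T s j i, alpha_self]
    ring
  have hSB : ∑ k ∈ (Finset.Icc 1 d).filter (fun k => k ≠ i ∧ k ≠ j), alphaT m T s i k
      = -(s i : ℝ) - alphaT m T s i j + (s i : ℝ) * (s i) / 3 := by
    rw [sum_filter_ne2 hi hj hij (fun k => alphaT m T s i k)]
    have h0 : ∑ k ∈ Finset.Icc 1 d, alphaT m T s i k = -(s i : ℝ) := by
      rw [Finset.sum_congr rfl (fun k _ => alpha_symm m T s i k)]
      exact aux_sum_alpha hrect hT hsum hi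
    rw [h0, alpha_self]
    ring
  have hY : ∀ k, Yfun m T s i j k
      = (qs s j / 3 * alphaT m T s i j) * alphaT m T s j k
        - (qs s j / 9) * alphaT m T s i k := by
    intro k
    unfold Yfun
    ring
  rw [Finset.sum_congr rfl (fun k _ => hY k), Finset.sum_sub_distrib,
    ← Finset.mul_sum, ← Finset.mul_sum, hSA, hSB]
  have hq := aux_quad hrect hT hs hi hj hij
  rcases hs i hi with h | h <;> rcases hs j hj with h' | h'
  · rw [qs_one h, qs_one h'] at hq ⊢; rw [h, h']; push_cast
    linear_combination (-1/9 : ℝ) * hq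
  · rw [qs_one h, qs_two h'] at hq ⊢; rw [h, h']; push_cast
    linear_combination (1/9 : ℝ) * hq
  · rw [qs_two h, qs_one h'] at hq ⊢; rw [h, h']; push_cast
    linear_combination (-1/9 : ℝ) * hq
  · rw [qs_two h, qs_two h'] at hq ⊢; rw [h, h']; push_cast
    linear_combination (1/9 : ℝ) * hq

end Sums

section Main

variable {m d : ℕ} {s : ℕ → ℕ} {μ : YoungDiagram} {T : SemistandardYoungTableau μ}

lemma sum_swap_pairs (A : Finset ℕ) (g : ℕ → ℕ → ℝ) :
    ∑ i ∈ A, ∑ k ∈ A.filter (· ≠ i), g i k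
      = ∑ i ∈ A, ∑ k ∈ A.filter (· ≠ i), g k i := by
  have h1 : ∀ g' : ℕ → ℕ → ℝ, ∑ i ∈ A, ∑ k ∈ A.filter (· ≠ i), g' i k
      = ∑ i ∈ A, ∑ k ∈ A, if k ≠ i then g' i k else 0 := by
    intro g'
    exact Finset.sum_congr rfl fun i _ => Finset.sum_filter _ _
  rw [h1, h1, Finset.sum_comm]
  refine Finset.sum_congr rfl fun i _ => Finset.sum_congr rfl fun k _ => ?_
  by_cases h : i = k
  · subst h; simp
  · rw [if_pos h, if_pos (Ne.symm h)]

lemma sum_antisym (A : Finset ℕ) (f : ℕ → ℕ → ℝ)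
    (hf : ∀ i ∈ A, ∀ j ∈ A, f i j + f j i = 0) :
    ∑ j ∈ A, ∑ i ∈ A.filter (· ≠ j), f i j = 0 := by
  have h1 : ∑ j ∈ A, ∑ i ∈ A.filter (· ≠ j), f i j
      = ∑ j ∈ A, ∑ i ∈ A.filter (· ≠ j), f j i := sum_swap_pairs A (fun j i => f i j)
  have h2 : ∑ j ∈ A, ∑ i ∈ A.filter (· ≠ j), f i j
        + ∑ j ∈ A, ∑ i ∈ A.filter (· ≠ j), f i j = 0 := by
    nth_rewrite 2 [h1]
    rw [← Finset.sum_add_distrib]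
    refine Finset.sum_eq_zero fun j hj => ?_
    rw [← Finset.sum_add_distrib]
    refine Finset.sum_eq_zero fun i hi => ?_
    exact hf i (Finset.mem_of_mem_filter i hi) j hj
  linarith

lemma keyj (hrect : μ.cells = Finset.range m ×ˢ Finset.range 3)
    (hT : hasContent T d s) (hs : ∀ i ∈ Finset.Icc 1 d, s i = 1 ∨ s i = 2)
    (hsum : ∑ i ∈ Finset.Icc 1 d, s i = 3 * m) (x : ℕ → ℝ)
    {j : ℕ} (hj : j ∈ Finset.Icc 1 d) :
    3 * (∑ i ∈ (Finset.Icc 1 d).filter (· ≠ j),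
        ∑ k ∈ (Finset.Icc 1 d).filter (fun k => k ≠ i ∧ k ≠ j),
          ((x j) ^ 2 + (x j / 2) * (x i + x k)) * Yfun m T s i j k)
    + (1/3) * ∑ i ∈ (Finset.Icc 1 d).filter (· ≠ j),
        alphaT m T s i j * x j * (x j + x i / 2) * (qs s i + 3 * qs s j)
    = -(4/9) * qs s j * (x j)^2
      + (1/6) * ∑ i ∈ (Finset.Icc 1 d).filter (· ≠ j),
          alphaT m T s i j * x i * x j * (qs s j - qs s i) := by
  set A := (Finset.Icc 1 d).filter (· ≠ j) with hA
  have hB : ∀ i : ℕ, (Finset.Icc 1 d).filter (fun k => k ≠ i ∧ k ≠ j)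
      = A.filter (· ≠ i) := by
    intro i
    rw [hA, Finset.filter_filter]
    apply Finset.filter_congr
    intro k _
    simp only [ne_eq]
    tauto
  have hmemA : ∀ i ∈ A, i ∈ Finset.Icc 1 d ∧ i ≠ j := by
    intro i hi
    exact ⟨Finset.mem_of_mem_filter i hi, (Finset.mem_filter.1 hi).2⟩
  have hcollapse : ∀ i ∈ A, ∑ k ∈ A.filter (· ≠ i), Yfun m T s i j k
      = -(qs s i + qs s j) * alphaT m T s i j / 9 := by
    intro i hi
    rw [← hB i]
    exact aux_sumY hrect hT hs hsum (hmemA i hi).1 hj (hmemA i hi).2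
  -- split the triple sum
  have hsplit : ∑ i ∈ A, ∑ k ∈ (Finset.Icc 1 d).filter (fun k => k ≠ i ∧ k ≠ j),
        ((x j) ^ 2 + (x j / 2) * (x i + x k)) * Yfun m T s i j k
      = (∑ i ∈ A, ((x j)^2 + x j / 2 * x i) * (-(qs s i + qs s j) * alphaT m T s i j / 9))
        + ∑ i ∈ A, ∑ k ∈ A.filter (· ≠ i), (x j / 2 * x k) * Yfun m T s i j k := by
    rw [← Finset.sum_add_distrib]
    refine Finset.sum_congr rfl fun i hi => ?_
    rw [hB i, ← hcollapse i hi, Finset.mul_sum, ← Finset.sum_add_distrib]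
    refine Finset.sum_congr rfl fun k _ => ?_
    ring
  have hswap : ∑ i ∈ A, ∑ k ∈ A.filter (· ≠ i), (x j / 2 * x k) * Yfun m T s i j k
      = ∑ i ∈ A, (x j / 2 * x i) * (-(qs s i + qs s j) * alphaT m T s i j / 9) := by
    rw [sum_swap_pairs A (fun i k => (x j / 2 * x k) * Yfun m T s i j k)]
    refine Finset.sum_congr rfl fun i hi => ?_
    have : ∀ k, Yfun m T s k j i = Yfun m T s i j k := fun k => (Y_symm m T s i j k).symm
    rw [← hcollapse i hi, Finset.mul_sum]
    refine Finset.sum_congr rfl fun k _ => ?_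
    rw [this k]
  rw [hsplit, hswap]
  have hcomb : 3 * ((∑ i ∈ A, ((x j)^2 + x j / 2 * x i) * (-(qs s i + qs s j) * alphaT m T s i j / 9))
        + ∑ i ∈ A, (x j / 2 * x i) * (-(qs s i + qs s j) * alphaT m T s i j / 9))
      + (1/3) * ∑ i ∈ A, alphaT m T s i j * x j * (x j + x i / 2) * (qs s i + 3 * qs s j)
      = ∑ i ∈ A, ((2/3) * qs s j * (x j)^2 * alphaT m T s i j
          + (1/6) * (alphaT m T s i j * x i * x j * (qs s j - qs s i))) := by
    rw [mul_add, Finset.mul_sum, Finset.mul_sum, Finset.mul_sum,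
      ← Finset.sum_add_distrib, ← Finset.sum_add_distrib]
    refine Finset.sum_congr rfl fun i _ => ?_
    ring
  rw [hcomb, Finset.sum_add_distrib, ← Finset.mul_sum, ← Finset.mul_sum,
    aux_sum_alpha_ne hrect hT hs hsum hj]
  ring

end Main

/-- the quadratically-weighted sum identity
`3 Σ_j Σ_{i≠j} Σ_{k≠i,j} (x_j² + (x_j/2)(x_i + x_k)) Y(i,j,k)
  + (1/3) Σ_j Σ_{i≠j} α_T(i,j) x_j (x_j + x_i/2)(q_i + 3 q_j)
  + (4/9) Σ_j q_j x_j² = 0`. -/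


theorem Y_quadratic_weighted_sum_identity
    (m d : ℕ) (s : ℕ → ℕ)
    (hs : ∀ i ∈ Finset.Icc 1 d, s i = 1 ∨ s i = 2)
    (hsum : ∑ i ∈ Finset.Icc 1 d, s i = 3 * m)
    (μ : YoungDiagram) (hrect : μ.cells = Finset.range m ×ˢ Finset.range 3)
    (T : SemistandardYoungTableau μ) (hT : hasContent T d s)
    (x : ℕ → ℝ) :
    3 * (∑ j ∈ Finset.Icc 1 d, ∑ i ∈ (Finset.Icc 1 d).filter (· ≠ j),
        ∑ k ∈ (Finset.Icc 1 d).filter (fun k => k ≠ i ∧ k ≠ j),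
          ((x j) ^ 2 + (x j / 2) * (x i + x k)) * Yfun m T s i j k)
    + (1/3) * ∑ j ∈ Finset.Icc 1 d, ∑ i ∈ (Finset.Icc 1 d).filter (· ≠ j),
        alphaT m T s i j * x j * (x j + x i / 2) * (qs s i + 3 * qs s j)
    + (4/9) * ∑ j ∈ Finset.Icc 1 d, qs s j * (x j) ^ 2 = 0 := by
  have hkey : ∑ j ∈ Finset.Icc 1 d,
      (3 * (∑ i ∈ (Finset.Icc 1 d).filter (· ≠ j),
        ∑ k ∈ (Finset.Icc 1 d).filter (fun k => k ≠ i ∧ k ≠ j),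
          ((x j) ^ 2 + (x j / 2) * (x i + x k)) * Yfun m T s i j k)
      + (1/3) * ∑ i ∈ (Finset.Icc 1 d).filter (· ≠ j),
        alphaT m T s i j * x j * (x j + x i / 2) * (qs s i + 3 * qs s j))
      = ∑ j ∈ Finset.Icc 1 d, (-(4/9) * qs s j * (x j)^2
        + (1/6) * ∑ i ∈ (Finset.Icc 1 d).filter (· ≠ j),
          alphaT m T s i j * x i * x j * (qs s j - qs s i)) :=
    Finset.sum_congr rfl fun j hj => keyj hrect hT hs hsum x hj
  have hanti : ∑ j ∈ Finset.Icc 1 d, ∑ i ∈ (Finset.Icc 1 d).filter (· ≠ j),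
      alphaT m T s i j * x i * x j * (qs s j - qs s i) = 0 := by
    apply sum_antisym
    intro i _ j _
    rw [alpha_symm m T s j i]
    ring
  have hexp : 3 * (∑ j ∈ Finset.Icc 1 d, ∑ i ∈ (Finset.Icc 1 d).filter (· ≠ j),
        ∑ k ∈ (Finset.Icc 1 d).filter (fun k => k ≠ i ∧ k ≠ j),
          ((x j) ^ 2 + (x j / 2) * (x i + x k)) * Yfun m T s i j k)
      + (1/3) * ∑ j ∈ Finset.Icc 1 d, ∑ i ∈ (Finset.Icc 1 d).filter (· ≠ j),
        alphaT m T s i j * x j * (x j + x i / 2) * (qs s i + 3 * qs s j)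
      = ∑ j ∈ Finset.Icc 1 d,
        (3 * (∑ i ∈ (Finset.Icc 1 d).filter (· ≠ j),
          ∑ k ∈ (Finset.Icc 1 d).filter (fun k => k ≠ i ∧ k ≠ j),
            ((x j) ^ 2 + (x j / 2) * (x i + x k)) * Yfun m T s i j k)
        + (1/3) * ∑ i ∈ (Finset.Icc 1 d).filter (· ≠ j),
          alphaT m T s i j * x j * (x j + x i / 2) * (qs s i + 3 * qs s j)) := by
    rw [Finset.mul_sum, Finset.mul_sum, ← Finset.sum_add_distrib]
  rw [hexp, hkey, Finset.sum_add_distrib]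
  have : ∑ j ∈ Finset.Icc 1 d, (1/6) * ∑ i ∈ (Finset.Icc 1 d).filter (· ≠ j),
      alphaT m T s i j * x i * x j * (qs s j - qs s i)
      = (1/6) * ∑ j ∈ Finset.Icc 1 d, ∑ i ∈ (Finset.Icc 1 d).filter (· ≠ j),
        alphaT m T s i j * x i * x j * (qs s j - qs s i) := by
    rw [Finset.mul_sum]
  rw [this, hanti]
  have : ∑ j ∈ Finset.Icc 1 d, -(4/9) * qs s j * (x j)^2
      = -(4/9) * ∑ j ∈ Finset.Icc 1 d, qs s j * (x j)^2 := by
    rw [Finset.mul_sum]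
    exact Finset.sum_congr rfl fun j _ => by ring
  rw [this]
  ring
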